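/- In the graph coordination game on the path v_1 — v_2 — v_3 — v_4 with edge weights w(v_1,v_2)=α, w(v_2,v_3)=1, w(v_3,v_4)=α, color sets S_{v_1}={a}, S_{v_2}={a,b}, S_{v_3}={c,b}, S_{v_4}={c}, the profile in which v_2 and v_3 choose b (and v_1, v_4 choose their only colors) is an α-approximate strong equilibrium with social welfare 2, while the profile where v_2 chooses a and v_3 chooses c has social welfare 4α. Hence the α-approximate strong price of anarchy of graph coordination games is at least 2α. -/
import Mathlib


open Finset

/-- Nodes `0,1,2,3` stand for `v₁,v₂,v₃,v₄` on the path `v₁ — v₂ — v₃ — v₄`. -/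
abbrev PathNode := Fin 4

/-- Colors: `0 = a`, `1 = b`, `2 = c`. -/
abbrev PathColor := Fin 3

/-- Color sets: `S_{v₁}={a}`, `S_{v₂}={a,b}`, `S_{v₃}={c,b}`, `S_{v₄}={c}`. -/
def pathAllowed : PathNode → Finset PathColor
  | 0 => {0}
  | 1 => {0, 1}
  | 2 => {2, 1}
  | 3 => {2}

/-- Edge weights: `w(v₁,v₂) = α`, `w(v₂,v₃) = 1`, `w(v₃,v₄) = α`; other pairs non-adjacent. -/
def pathW (α : ℝ) (u v : PathNode) : ℝ :=
  if (u = 0 ∧ v = 1) ∨ (u = 1 ∧ v = 0) then α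
  else if (u = 1 ∧ v = 2) ∨ (u = 2 ∧ v = 1) then 1
  else if (u = 2 ∧ v = 3) ∨ (u = 3 ∧ v = 2) then α
  else 0

/-- Payoff of node `v` under coloring `s`. -/
def pathP (α : ℝ) (s : PathNode → PathColor) (v : PathNode) : ℝ :=
  ∑ u ∈ univ.filter (fun u => s u = s v), pathW α v u

/-- Social welfare. -/
def pathSW (α : ℝ) (s : PathNode → PathColor) : ℝ := ∑ v, pathP α s v

/-- The equilibrium profile: `v₁ ↦ a, v₂ ↦ b, v₃ ↦ b, v₄ ↦ c`. -/
def pathEqProf : PathNode → PathColor := ![0, 1, 1, 2]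

/-- The optimal profile: `v₁ ↦ a, v₂ ↦ a, v₃ ↦ c, v₄ ↦ c`. -/
def pathOptProf : PathNode → PathColor := ![0, 0, 2, 2]

/-- On the path `v₁ — v₂ — v₃ — v₄` with weights `α, 1, α`, the profile in
which `v₂` and `v₃` choose `b` is an `α`-approximate strong equilibrium with social welfare
`2`, while the profile where `v₂` chooses `a` and `v₃` chooses `c` has social welfare `4α`;
hence the `α`-approximate strong price of anarchy of graph coordination games is at least
`2α`. -/
theorem alpha_strong_poa_lower_bound (α : ℝ) (hα : 1 ≤ α) :
    pathSW α pathEqProf = 2 ∧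
    pathSW α pathOptProf = 4 * α ∧
    -- `pathEqProf` is an `α`-approximate strong equilibrium:
    (∀ (K : Finset PathNode) (s' : PathNode → PathColor), K.Nonempty →
      (∀ v ∈ K, s' v ∈ pathAllowed v ∧ s' v ≠ pathEqProf v) →
      (∀ v ∉ K, s' v = pathEqProf v) →
      ∃ v ∈ K, pathP α s' v ≤ α * pathP α pathEqProf v) := by
  have hP : ∀ (s : PathNode → PathColor) (v : PathNode),
      pathP α s v = ∑ u, if s u = s v then pathW α v u else 0 := by
    intro s v
    rw [pathP, Finset.sum_filter]
  refine ⟨?_, ?_, ?_⟩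
  · simp [pathSW, hP, Fin.sum_univ_four, pathEqProf, pathW]
    norm_num
  · simp [pathSW, hP, Fin.sum_univ_four, pathOptProf, pathW]
    norm_num; ring
  · intro K s' hK hdev hfix
    have h0 : (0 : PathNode) ∉ K := by
      intro h
      obtain ⟨hm, hne⟩ := hdev 0 h
      simp [pathAllowed, pathEqProf] at hm hne
      exact hne hm
    have h3 : (3 : PathNode) ∉ K := by
      intro h
      obtain ⟨hm, hne⟩ := hdev 3 h
      simp [pathAllowed, pathEqProf] at hm hne
      exact hne hm
    have hs0 : s' 0 = 0 := hfix 0 h0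
    have hs3 : s' 3 = 2 := hfix 3 h3
    have hs2ne : s' 2 ≠ 0 := by
      by_cases h : (2 : PathNode) ∈ K
      · obtain ⟨hm, _⟩ := hdev 2 h
        simp [pathAllowed] at hm
        rcases hm with h' | h' <;> simp [h']
      · have := hfix 2 h
        simp [pathEqProf] at this
        simp [this]
    have hs1ne : s' 1 ≠ 2 := by
      by_cases h : (1 : PathNode) ∈ K
      · obtain ⟨hm, _⟩ := hdev 1 h
        simp [pathAllowed] at hm
        rcases hm with h' | h' <;> simp [h']
      · have := hfix 1 h
        simp [pathEqProf] at this
        simp [this]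
    have h12 : (1 : PathNode) ∈ K ∨ (2 : PathNode) ∈ K := by
      obtain ⟨v, hv⟩ := hK
      fin_cases v
      · exact absurd hv h0
      · exact Or.inl hv
      · exact Or.inr hv
      · exact absurd hv h3
    rcases h12 with h | h
    · refine ⟨1, h, ?_⟩
      obtain ⟨hm, hne⟩ := hdev 1 h
      simp [pathAllowed, pathEqProf] at hm hne
      have hs1 : s' 1 = 0 := by rcases hm with h' | h'; exact h'; exact absurd h' hne
      have hs2ne' : s' 2 ≠ s' 1 := by rw [hs1]; exact hs2ne
      rw [hP, hP, Fin.sum_univ_four, Fin.sum_univ_four]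
      simp [pathEqProf, pathW, hs0, hs1, hs3, hs2ne', hs2ne]
    · refine ⟨2, h, ?_⟩
      obtain ⟨hm, hne⟩ := hdev 2 h
      simp [pathAllowed, pathEqProf] at hm hne
      have hs2 : s' 2 = 2 := by rcases hm with h' | h'; exact h'; exact absurd h' hne
      have hs1ne' : s' 1 ≠ s' 2 := by rw [hs2]; exact hs1ne
      have hs0' : s' 0 ≠ s' 2 := by rw [hs0, hs2]; decide
      rw [hP, hP, Fin.sum_univ_four, Fin.sum_univ_four]
      simp [pathEqProf, pathW, hs2, hs3, hs1ne', hs0', hs1ne]
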